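/- Conversely, if Tr_g f is constant for every nonconstant rational function g with g ≡ 0 mod m, then f admits m as a modulus: f((h)) = 0 for every h ≡ 1 mod m. -/
import Mathlib


open scoped BigOperators

/-- Trace criterion, converse direction: if `Tr_g f` is constant for every
nonconstant rational function `g` with `g ≡ 0 mod m`, then `f` admits `m` as a
modulus: `f((h)) = 0` for every `h ≡ 1 mod m`. -/
theorem stmt8 {k F X G : Type*} [Field k] [Field F] [Algebra k F] [AddCommGroup G]
    (v : X → F → ℤ) (S : Set X) (n : X → ℕ) (f : X → G)
    (hmul : ∀ P (x y : F), x ≠ 0 → y ≠ 0 → v P (x * y) = v P x + v P y)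
    (hadd : ∀ P (x y : F), x ≠ 0 → y ≠ 0 → x + y ≠ 0 → min (v P x) (v P y) ≤ v P (x + y))
    (halg : ∀ P (c : k), c ≠ 0 → v P (algebraMap k F c) = 0)
    (hfin : ∀ x : F, x ≠ 0 → (Function.support fun P => v P x).Finite)
    (htr : ∀ g : F, g ∉ Set.range (algebraMap k F) →
        (∀ P ∈ S, (n P : ℤ) ≤ v P g) →
        ∀ a : k, ∑ᶠ P, max (v P (g - algebraMap k F a)) 0 • f P
          = ∑ᶠ P, max (-(v P g)) 0 • f P) :
    ∀ h : F, h ≠ 0 → (∀ P ∈ S, (n P : ℤ) ≤ v P (1 - h)) →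
      ∑ᶠ P, v P h • f P = 0 := by
  intro h hh hmod
  have hone : ∀ P, v P (1 : F) = 0 := by
    intro P
    have := hmul P 1 1 one_ne_zero one_ne_zero
    simp at this
    omega
  have hnegone : ∀ P, v P (-1 : F) = 0 := by
    intro P
    have := hmul P (-1) (-1) (by norm_num) (by norm_num)
    simp [hone] at this
    omega
  have hneg : ∀ P (x : F), x ≠ 0 → v P (-x) = v P x := by
    intro P x hx
    have := hmul P (-1) x (by norm_num) hx
    simp [hnegone] at this
    simpa using this
  by_cases hg0 : (1 : F) - h = 0
  · have : h = 1 := by linear_combination -hg0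
    simp [this, hone]
  · by_cases hcg : (1 : F) - h ∈ Set.range (algebraMap k F)
    · -- h is a nonzero constant, so v P h = 0 everywhere
      obtain ⟨c, hc⟩ := hcg
      have hc1 : (1 : k) - c ≠ 0 := by
        intro h1c
        have : c = 1 := by linear_combination -h1c
        rw [this, map_one] at hc
        apply hh
        linear_combination hc
      have hhc : h = algebraMap k F (1 - c) := by
        rw [map_sub, map_one]; linear_combination hc
      have hv : ∀ P, v P h = 0 := fun P => by
        rw [hhc]; exact halg P _ hc1
      simp [hv]
    · -- main case
      set g : F := 1 - h with hgdef
      have key1 := htr g hcg hmod 1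
      rw [map_one] at key1
      have hg1 : g - 1 = -h := by rw [hgdef]; ring
      rw [hg1] at key1
      have hvneg : ∀ P, v P (-h) = v P h := fun P => hneg P h hh
      simp only [hvneg] at key1
      -- pointwise: max (-(v P g)) 0 = max (-(v P h)) 0
      have hmax : ∀ P, max (-(v P g)) 0 = max (-(v P h)) 0 := by
        intro P
        have h1 : min (v P (1 : F)) (v P (-h)) ≤ v P (1 + -h) :=
          hadd P 1 (-h) one_ne_zero (neg_ne_zero.mpr hh) (by
            intro hc; apply hg0; linear_combination hc)
        have h2 : min (v P (1 : F)) (v P (-g)) ≤ v P (1 + -g) :=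
          hadd P 1 (-g) one_ne_zero (neg_ne_zero.mpr hg0) (by
            intro hc; apply hh; rw [hgdef] at hc; linear_combination hc)
        have e1 : (1 : F) + -h = g := by rw [hgdef]; ring
        have e2 : (1 : F) + -g = h := by rw [hgdef]; ring
        rw [e1, hone, hvneg] at h1
        rw [e2, hone, hneg P g hg0] at h2
        omega
      -- finiteness of supports
      have hs1 : (Function.support fun P => max (v P h) 0 • f P).Finite := by
        apply (hfin h hh).subset
        intro P hP
        simp only [Function.mem_support] at hP ⊢
        intro hv0
        apply hP
        simp [hv0]
      have hs2 : (Function.support fun P => max (-(v P h)) 0 • f P).Finite := by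
        apply (hfin h hh).subset
        intro P hP
        simp only [Function.mem_support] at hP ⊢
        intro hv0
        apply hP
        simp [hv0]
      have split : ∑ᶠ P, v P h • f P
          = (∑ᶠ P, max (v P h) 0 • f P) - ∑ᶠ P, max (-(v P h)) 0 • f P := by
        rw [← finsum_sub_distrib hs1 hs2]
        apply finsum_congr
        intro P
        rw [← sub_smul]
        congr 1
        omega
      simp only [hmax] at key1
      rw [split, key1, sub_self]
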